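/- Let V be a linear subspace of span{e₀, e₁} and let M and N be nonzero closed subspaces of H²_V, each invariant under multiplication by every analytic polynomial p whose coefficient of e₁ is zero (i.e. invariant for the representation of the Neil algebra on H²_V). Then M and N are not orthogonal. In other words, the representation π_V of the Neil algebra on H²_V has rank one: there is no nontrivial pair of mutually orthogonal invariant subspaces. -/

import Mathlib

noncomputable section

open MeasureTheory Complex
open scoped ComplexConjugate

namespace NeilToeplitz

instance fact_two_pi_pos : Fact (0 < 2 * Real.pi) := ⟨by positivity⟩

/-- The circle group `ℝ / 2πℤ`. -/
abbrev 𝕋 : Type := AddCircle (2 * Real.pi)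

/-- Normalized arclength (Haar probability) measure on the circle. -/
abbrev μ : Measure 𝕋 := AddCircle.haarAddCircle

/-- The Lebesgue space `L²(𝕋)`. -/
abbrev L2 : Type := Lp ℂ 2 μ

/-- The exponential `e_n(e^{it}) = e^{int}` as an element of `L²(𝕋)`. -/
def e (n : ℤ) : L2 := fourierLp 2 n

/-- The Hardy space `H²`, the closed linear span of `{e_n : n ≥ 0}` in `L²(𝕋)`. -/
def H2 : Submodule ℂ L2 :=
  (Submodule.span ℂ (Set.range fun n : ℕ => e (n : ℤ))).topologicalClosure

/-- The space `H²_V = H² ∩ V^⊥`. -/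
def H2V (V : Submodule ℂ L2) : Submodule ℂ L2 := H2 ⊓ Vᗮ

lemma isClosed_H2V (V : Submodule ℂ L2) : IsClosed ((H2V V : Set L2)) := by
  have h1 : IsClosed ((H2 : Set L2)) := Submodule.isClosed_topologicalClosure _
  have h2 : IsClosed ((Vᗮ : Set L2)) := Submodule.isClosed_orthogonal V
  simpa [H2V] using h1.inter h2

instance (V : Submodule ℂ L2) : CompleteSpace (H2V V) :=
  (isClosed_H2V V).completeSpace_coe

/-- A bounded (a.e.) measurable function times an `L²` function is in `L²`. -/
lemma memLp_bdd_mul {φ : 𝕋 → ℂ} (hφ : AEStronglyMeasurable φ μ) (C : ℝ)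
    (hC : ∀ᵐ x ∂μ, ‖φ x‖ ≤ C) (g : L2) :
    MemLp (fun x => φ x * g x) 2 μ := by
  refine MemLp.of_le_mul (c := C) (Lp.memLp g) (hφ.mul (Lp.aestronglyMeasurable g)) ?_
  filter_upwards [hC] with x hx
  rw [norm_mul]
  exact mul_le_mul_of_nonneg_right hx (norm_nonneg _)

/-- Multiplication of `g ∈ L²` by a real-valued bounded measurable symbol `φ`. -/
def phiMul (φ : 𝕋 → ℝ) (hφ : Measurable φ) {C : ℝ} (hC : ∀ x, |φ x| ≤ C) (g : L2) : L2 :=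
  (memLp_bdd_mul ((Complex.measurable_ofReal.comp hφ).aestronglyMeasurable) C
    (Filter.Eventually.of_forall fun x => by simpa using hC x) g).toLp _

/-- The Toeplitz operator `T_φ^V : H²_V → H²_V`, `g ↦ P_V (φ · g)`. -/
def toeplitz (φ : 𝕋 → ℝ) (hφ : Measurable φ) {C : ℝ} (hC : ∀ x, |φ x| ≤ C)
    (V : Submodule ℂ L2) (g : H2V V) : H2V V :=
  (H2V V).orthogonalProjectionOnto (phiMul φ hφ hC (g : L2))

/-- Multiplication of `g ∈ L²` by the exponential `e_n`. -/
def mulFourier (n : ℤ) (g : L2) : L2 :=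
  (memLp_bdd_mul (map_continuous (fourier n)).aestronglyMeasurable 1
    (Filter.Eventually.of_forall fun x => le_of_eq (Circle.norm_coe _)) g).toLp _

/-- `g` is outer: the analytic-polynomial multiples of `g` are dense in `H²`. -/
def Outer (g : L2) : Prop :=
  (Submodule.span ℂ (Set.range fun n : ℕ => mulFourier (n : ℤ) g)).topologicalClosure = H2

/-- `lam` is an eigenvalue of `φ` relative to the Neil algebra. -/
def IsEigenvalueRelNeil (φ : 𝕋 → ℝ) (hφ : Measurable φ) {C : ℝ} (hC : ∀ x, |φ x| ≤ C)
    (lam : ℝ) : Prop :=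
  ∃ V : Submodule ℂ L2, V ≤ Submodule.span ℂ {e 0, e 1} ∧
    ∃ g : H2V V, g ≠ 0 ∧ toeplitz φ hφ hC V g = (lam : ℂ) • g

end NeilToeplitz

/-!
Suppose `M ⟂ N` and pick nonzero `f ∈ M`, `g ∈ N`. Then `⟪e_n f, e_m g⟫ = 0` for all
`n, m ∈ ℕ \ {1}`, and every integer is such a difference `n - m`, so all Fourier coefficients of
the integrable function `conj f * g` vanish; hence `conj f * g = 0`, i.e. `f * g = 0`, almost
everywhere. But if the lowest nonvanishing Fourier coefficients of `f, g ∈ H²` sit at `p` and `q`,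
then the `(p + q)`-th coefficient of `f * g` is `f̂ p * ĝ q ≠ 0`.
-/

open Filter Topology
open scoped NNReal BoundedContinuousFunction InnerProductSpace

theorem MeasureTheory.Integrable.ae_eq_zero_of_forall_integral_smul_eq_zero {X E : Type*}
    [TopologicalSpace X] [HasOuterApproxClosed X] [MeasurableSpace X] [BorelSpace X]
    [NormedAddCommGroup E] [NormedSpace ℝ E] [CompleteSpace E] {μ : Measure X} {w : X → E}
    (hw : Integrable w μ) (h : ∀ φ : X →ᵇ ℝ≥0, ∫ x, (φ x : ℝ) • w x ∂μ = 0) : w =ᵐ[μ] 0 := by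
  refine ae_eq_zero_of_forall_setIntegral_isClosed_eq_zero hw fun s hs => ?_
  have hlim : Tendsto (fun n => ∫ x, (hs.apprSeq n x : ℝ) • w x ∂μ) atTop
      (𝓝 (∫ x, s.indicator w x ∂μ)) := by
    refine tendsto_integral_of_dominated_convergence (fun x => ‖w x‖)
      (fun n => ((NNReal.continuous_coe.comp (hs.apprSeq n).continuous).aestronglyMeasurable).smul
        hw.aestronglyMeasurable) hw.norm (fun n => ae_of_all _ fun x => ?_)
      (ae_of_all _ fun x => ?_)
    · rw [norm_smul, Real.norm_eq_abs, abs_of_nonneg (NNReal.coe_nonneg _)]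
      exact mul_le_of_le_one_left (norm_nonneg _)
        (by exact_mod_cast HasOuterApproxClosed.apprSeq_apply_le_one hs n x)
    · have hx := ((NNReal.continuous_coe.tendsto _).comp
        (tendsto_pi_nhds.1 (HasOuterApproxClosed.tendsto_apprSeq hs) x)).smul_const (w x)
      by_cases hxs : x ∈ s <;> simpa [hxs] using hx
  rw [← integral_indicator hs.measurableSet]
  exact tendsto_nhds_unique hlim (by simp only [h, tendsto_const_nhds])

theorem MeasureTheory.Integrable.continuousMap_mul {X : Type*} [TopologicalSpace X]
    [CompactSpace X] [MeasurableSpace X] [OpensMeasurableSpace X] {μ : Measure X} {w : X → ℂ}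
    (hw : Integrable w μ) (φ : C(X, ℂ)) : Integrable (fun x => φ x * w x) μ :=
  hw.bdd_mul φ.continuous.aestronglyMeasurable (c := ‖φ‖) (ae_of_all _ φ.norm_coe_le_norm)

namespace AddCircle

variable {T : ℝ} [Fact (0 < T)]

/- The trigonometric polynomials are uniformly dense, and integration against `w` is a continuous
functional on `C(AddCircle T, ℂ)`. -/
theorem integral_continuousMap_mul_eq_zero_of_fourierCoeff_eq_zero {w : AddCircle T → ℂ}
    (hw : Integrable w haarAddCircle) (h : ∀ n, fourierCoeff w n = 0) (φ : C(AddCircle T, ℂ)) :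
    ∫ x, φ x * w x ∂haarAddCircle = 0 := by
  let Λ : C(AddCircle T, ℂ) →L[ℂ] ℂ := LinearMap.mkContinuous
    { toFun := fun φ => ∫ x, φ x * w x ∂haarAddCircle
      map_add' := fun φ ψ => by
        simp only [ContinuousMap.add_apply, add_mul]
        exact integral_add (hw.continuousMap_mul φ) (hw.continuousMap_mul ψ)
      map_smul' := fun c φ => by
        simp only [ContinuousMap.smul_apply, smul_eq_mul, mul_assoc, RingHom.id_apply]
        exact integral_const_mul c _ }
    (∫ x, ‖w x‖ ∂haarAddCircle) fun φ => by
      rw [mul_comm, ← integral_const_mul]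
      refine norm_integral_le_of_norm_le (hw.norm.const_mul _) (ae_of_all _ fun x => ?_)
      rw [norm_mul]
      exact mul_le_mul_of_nonneg_right (φ.norm_coe_le_norm x) (norm_nonneg _)
  have hker : (Submodule.span ℂ (Set.range (fourier (T := T)))).topologicalClosure ≤ Λ.ker := by
    refine Submodule.topologicalClosure_minimal _ (Submodule.span_le.2 ?_) Λ.isClosed_ker
    rintro _ ⟨n, rfl⟩
    simpa [Λ, fourierCoeff, mul_comm] using h (-n)
  rw [span_fourier_closure_eq_top] at hker
  exact hker (Submodule.mem_top (x := φ))

theorem ae_eq_zero_of_fourierCoeff_eq_zero {w : AddCircle T → ℂ}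
    (hw : Integrable w haarAddCircle) (h : ∀ n, fourierCoeff w n = 0) :
    w =ᵐ[haarAddCircle] 0 := by
  refine hw.ae_eq_zero_of_forall_integral_smul_eq_zero fun φ => ?_
  have := integral_continuousMap_mul_eq_zero_of_fourierCoeff_eq_zero hw h
    ⟨fun x => ((φ x : ℝ) : ℂ), by fun_prop⟩
  simp only [ContinuousMap.coe_mk] at this
  simpa only [Complex.real_smul] using this

theorem fourierCoeff_eq_inner (u : Lp ℂ 2 (haarAddCircle (T := T))) (n : ℤ) :
    fourierCoeff u n = ⟪fourierLp 2 n, u⟫_ℂ := by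
  rw [← fourierBasis_repr, HilbertBasis.repr_apply_apply, coe_fourierBasis]

theorem inner_eq_tsum_fourierCoeff (u v : Lp ℂ 2 (haarAddCircle (T := T))) :
    ⟪u, v⟫_ℂ = ∑' n, conj (fourierCoeff u n) * fourierCoeff v n := by
  simp_rw [fourierCoeff_eq_inner, inner_conj_symm]
  rw [← fourierBasis.tsum_inner_mul_inner u v, coe_fourierBasis]

theorem exists_fourierCoeff_ne_zero {u : Lp ℂ 2 (haarAddCircle (T := T))} (hu : u ≠ 0) :
    ∃ n, fourierCoeff u n ≠ 0 := by
  by_contra! h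
  refine hu (fourierBasis.repr.map_eq_zero_iff.1 ?_)
  ext n
  simpa [fourierBasis_repr] using h n

theorem fourierCoeff_star (u : Lp ℂ 2 (haarAddCircle (T := T))) (n : ℤ) :
    fourierCoeff (star u : Lp ℂ 2 haarAddCircle) n = conj (fourierCoeff u (-n)) := by
  rw [fourierCoeff_congr_ae (Lp.coeFn_star u), fourierCoeff, fourierCoeff, ← integral_conj]
  congr 1 with x
  simp

theorem integral_mul_eq_tsum_fourierCoeff (u v : Lp ℂ 2 (haarAddCircle (T := T))) :
    ∫ x, u x * v x ∂haarAddCircle = ∑' n, fourierCoeff u (-n) * fourierCoeff v n := by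
  have h := inner_eq_tsum_fourierCoeff (star u) v
  simp only [fourierCoeff_star, RCLike.conj_conj] at h
  rw [← h, L2.inner_def]
  refine integral_congr_ae ?_
  filter_upwards [Lp.coeFn_star u] with x hx
  simp [hx, mul_comm]

end AddCircle

namespace NeilToeplitz

theorem coeFn_mulFourier (n : ℤ) (u : L2) :
    mulFourier n u =ᵐ[μ] fun x => fourier n x * u x :=
  MemLp.coeFn_toLp _

theorem fourierCoeff_mulFourier (n : ℤ) (u : L2) (k : ℤ) :
    fourierCoeff (mulFourier n u) k = fourierCoeff u (k - n) := by
  rw [fourierCoeff_congr_ae (coeFn_mulFourier n u), fourierCoeff, fourierCoeff]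
  congr 1 with x
  rw [smul_eq_mul, smul_eq_mul, ← mul_assoc, ← fourier_add, neg_sub, sub_eq_neg_add]

theorem inner_mulFourier_mulFourier (f g : L2) (n m : ℤ) :
    ⟪mulFourier n f, mulFourier m g⟫_ℂ = fourierCoeff (fun x => conj (f x) * g x) (n - m) := by
  rw [L2.inner_def, fourierCoeff]
  refine integral_congr_ae ?_
  filter_upwards [coeFn_mulFourier n f, coeFn_mulFourier m g] with x hf hg
  rw [hf, hg, RCLike.inner_apply, smul_eq_mul, map_mul, ← fourier_neg, neg_sub, sub_eq_neg_add,
    fourier_add]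
  ring

theorem fourierCoeff_mul_eq_tsum (u v : L2) (n : ℤ) :
    fourierCoeff (fun x => u x * v x) n = ∑' k, fourierCoeff u (n - k) * fourierCoeff v k := by
  have h : fourierCoeff (fun x => u x * v x) n = ∫ x, mulFourier (-n) u x * v x ∂μ := by
    refine integral_congr_ae ?_
    filter_upwards [coeFn_mulFourier (-n) u] with x hx
    rw [hx, smul_eq_mul, mul_assoc]
  simp_rw [h, AddCircle.integral_mul_eq_tsum_fourierCoeff, fourierCoeff_mulFourier, sub_neg_eq_add,
    neg_add_eq_sub]

theorem fourierCoeff_mul_add_eq_mul {u v : L2} {p q : ℤ}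
    (hu : ∀ k < p, fourierCoeff u k = 0) (hv : ∀ k < q, fourierCoeff v k = 0) :
    fourierCoeff (fun x => u x * v x) (p + q) = fourierCoeff u p * fourierCoeff v q := by
  rw [fourierCoeff_mul_eq_tsum, tsum_eq_single q fun k hk => ?_, add_sub_cancel_right]
  rcases hk.lt_or_gt with hkq | hqk
  · rw [hv k hkq, mul_zero]
  · rw [hu _ (by omega), zero_mul]

theorem fourierCoeff_eq_zero_of_mem_H2 {u : L2} (hu : u ∈ H2) {k : ℤ} (hk : k < 0) :
    fourierCoeff u k = 0 := by
  suffices H2 ≤ (innerSL ℂ (e k)).ker by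
    simpa [AddCircle.fourierCoeff_eq_inner, e] using this hu
  refine Submodule.topologicalClosure_minimal _ (Submodule.span_le.2 ?_)
    (innerSL ℂ (e k)).isClosed_ker
  rintro _ ⟨n, rfl⟩
  exact orthonormal_fourier.2 (show k ≠ n by omega)

theorem exists_least_fourierCoeff_ne_zero_of_mem_H2 {u : L2} (hu : u ∈ H2) (hu0 : u ≠ 0) :
    ∃ p, fourierCoeff u p ≠ 0 ∧ ∀ k < p, fourierCoeff u k = 0 := by
  obtain ⟨p, hp, hmin⟩ := Int.exists_least_of_bdd
    ⟨0, fun k hk => not_lt.1 fun hk0 => hk (fourierCoeff_eq_zero_of_mem_H2 hu hk0)⟩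
    (AddCircle.exists_fourierCoeff_ne_zero hu0)
  exact ⟨p, hp, fun k hk => not_not.1 fun h => (hmin k h).not_gt hk⟩

theorem not_mul_ae_eq_zero_of_mem_H2 {f g : L2} (hf : f ∈ H2) (hg : g ∈ H2) (hf0 : f ≠ 0)
    (hg0 : g ≠ 0) : ¬ (fun x => f x * g x) =ᵐ[μ] 0 := by
  intro hfg
  obtain ⟨p, hp, hpmin⟩ := exists_least_fourierCoeff_ne_zero_of_mem_H2 hf hf0
  obtain ⟨q, hq, hqmin⟩ := exists_least_fourierCoeff_ne_zero_of_mem_H2 hg hg0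
  apply mul_ne_zero hp hq
  rw [← fourierCoeff_mul_add_eq_mul hpmin hqmin, fourierCoeff_congr_ae hfg]
  simp [fourierCoeff]

theorem neil_representation_rank_one_general (V : Submodule ℂ L2)
    (M N : Submodule ℂ L2) (hMV : M ≤ H2V V) (hNV : N ≤ H2V V)
    (hM0 : M ≠ ⊥) (hN0 : N ≠ ⊥)
    (hMinv : ∀ n : ℕ, n ≠ 1 → ∀ f ∈ M, mulFourier (n : ℤ) f ∈ M)
    (hNinv : ∀ n : ℕ, n ≠ 1 → ∀ f ∈ N, mulFourier (n : ℤ) f ∈ N) :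
    ∃ f ∈ M, ∃ g ∈ N, (inner ℂ f g : ℂ) ≠ 0 := by
  by_contra! horth
  obtain ⟨f, hfM, hf0⟩ := Submodule.exists_mem_ne_zero_of_ne_bot hM0
  obtain ⟨g, hgN, hg0⟩ := Submodule.exists_mem_ne_zero_of_ne_bot hN0
  have hcoeff : ∀ d : ℤ, fourierCoeff (fun x => conj (f x) * g x) d = 0 := by
    intro d
    obtain ⟨n, m, hn, hm, rfl⟩ : ∃ n m : ℕ, n ≠ 1 ∧ m ≠ 1 ∧ (n : ℤ) - m = d := by
      rcases le_or_gt 0 d with hd | hd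
      · exact ⟨d.toNat + 2, 2, by omega, by omega, by omega⟩
      · exact ⟨2, (2 - d).toNat, by omega, by omega, by omega⟩
    rw [← inner_mulFourier_mulFourier]
    exact horth _ (hMinv n hn f hfM) _ (hNinv m hm g hgN)
  have hint : Integrable (fun x => conj (f x) * g x) μ := by
    simpa only [RCLike.inner_apply, mul_comm] using L2.integrable_inner (𝕜 := ℂ) f g
  refine not_mul_ae_eq_zero_of_mem_H2 (hMV hfM).1 (hNV hgN).1 hf0 hg0 ?_
  filter_upwards [AddCircle.ae_eq_zero_of_fourierCoeff_eq_zero hint hcoeff] with x hx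
  simpa using hx

/-- the representation of the Neil algebra on `H²_V` (for `V ⊆ span{e₀,e₁}`) has
rank one: two nonzero closed subspaces of `H²_V`, each invariant under multiplication by every
analytic polynomial with vanishing `e₁`-coefficient, cannot be orthogonal. -/
theorem neil_representation_rank_one (V : Submodule ℂ L2)
    (hV : V ≤ Submodule.span ℂ {e 0, e 1})
    (M N : Submodule ℂ L2) (hMV : M ≤ H2V V) (hNV : N ≤ H2V V)
    (hMc : IsClosed (M : Set L2)) (hNc : IsClosed (N : Set L2))
    (hM0 : M ≠ ⊥) (hN0 : N ≠ ⊥)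
    (hMinv : ∀ n : ℕ, n ≠ 1 → ∀ f ∈ M, mulFourier (n : ℤ) f ∈ M)
    (hNinv : ∀ n : ℕ, n ≠ 1 → ∀ f ∈ N, mulFourier (n : ℤ) f ∈ N) :
    ∃ f ∈ M, ∃ g ∈ N, (inner ℂ f g : ℂ) ≠ 0 :=
  neil_representation_rank_one_general V M N hMV hNV hM0 hN0 hMinv hNinv

end NeilToeplitz
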